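/- Let 𝒜 be a locally finite L-structure, ℬ an L'-structure, and suppose 𝒜 is a semi-retract of ℬ via (g, f). Let A be a finite substructure of 𝒜 and let A' = ⟨g(A)⟩_ℬ be the substructure of ℬ generated by the image g(A). If d ≥ 1 is an integer such that ℬ →ᵉ (B₀)^{A'}_{r,d} for every finitely generated substructure B₀ of ℬ and every integer r ≥ 2, then 𝒜 →ᵉ (B)^A_{r,d} for every finite substructure B of 𝒜 and every integer r ≥ 2; that is, if A' has Ramsey degree for embeddings at most d in ℬ, then A has Ramsey degree for embeddings at most d in 𝒜. -/

import Mathlib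

open FirstOrder FirstOrder.Language

/-- Two same-length tuples have the same quantifier-free type over ∅. -/
def SameQfType (L : FirstOrder.Language) (M : Type*) [L.Structure M] {n : ℕ}
    (x y : Fin n → M) : Prop :=
  ∀ φ : L.Formula (Fin n), φ.IsQF → (φ.Realize x ↔ φ.Realize y)

/-- A qftp-respecting injection between structures in possibly different languages. -/
def QftpRespecting (L L' : FirstOrder.Language) (M N : Type*) [L.Structure M] [L'.Structure N]
    (h : M → N) : Prop :=
  Function.Injective h ∧
    ∀ (n : ℕ) (x y : Fin n → M), SameQfType L M x y → SameQfType L' N (h ∘ x) (h ∘ y)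

/-- `(g, f)` is a semi-retraction between `M` and `N`: both maps are qftp-respecting
injections and `f ∘ g` is qftp-preserving (equivalently, an `L`-embedding of `M` into `M`). -/
def IsSemiRetraction (L L' : FirstOrder.Language) (M N : Type*)
    [L.Structure M] [L'.Structure N] (g : M → N) (f : N → M) : Prop :=
  QftpRespecting L L' M N g ∧ QftpRespecting L' L N M f ∧
    ∀ (n : ℕ) (x : Fin n → M), SameQfType L M x (f ∘ g ∘ x)

/-- `M` is locally finite: every finitely generated substructure is finite. -/
def StructLocallyFinite (L : FirstOrder.Language) (M : Type*) [L.Structure M] : Prop :=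
  ∀ S : L.Substructure M, S.FG → (S : Set M).Finite

/-- `M → (B)^A_{r,d}` for substructures. -/
def ArrowSub (L : FirstOrder.Language) (M : Type*) [L.Structure M]
    (A B : L.Substructure M) (r d : ℕ) : Prop :=
  ∀ c : L.Substructure M → Fin r, ∃ B' : L.Substructure M,
    Nonempty (B' ≃[L] B) ∧
      (c '' {A' : L.Substructure M | A' ≤ B' ∧ Nonempty (A' ≃[L] A)}).ncard ≤ d

/-- `M →ᵉ (B)^A_{r,d}` for embeddings. -/
def ArrowEmb (L : FirstOrder.Language) (M : Type*) [L.Structure M]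
    (A B : L.Substructure M) (r d : ℕ) : Prop :=
  ∀ c : (A ↪[L] M) → Fin r, ∃ h : B ↪[L] M,
    (c '' {j : A ↪[L] M | ∃ e : A ↪[L] B, j = h.comp e}).ncard ≤ d

/-- A structure is rigid if its only automorphism is the identity. -/
def IsRigidStructure (L : FirstOrder.Language) (M : Type*) [L.Structure M] : Prop :=
  ∀ σ : M ≃[L] M, ∀ x : M, σ x = x


/-!
Pull colourings back along `f`: an embedding `j : ⟨g(A)⟩ ↪ ℬ` induces the embedding
`a ↦ f (j (g a))` of `A` into `𝒜`, because `f ∘ g` preserves quantifier-free types and `f`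
respects them. Colour `Emb(⟨g(A)⟩, ℬ)` by the colour of the induced embedding, take a copy
`h : ⟨g(B)⟩ ↪ ℬ` with at most `d` colours, and pull it back to `H : B ↪ 𝒜` in the same
way. Every `e : A ↪ B` is pushed forward by `g` to an embedding `⟨g(A)⟩ ↪ ⟨g(B)⟩`, whose
composite with `h` induces `H ∘ e`; so the colours on `H ∘ Emb(A, B)` are among those on
`h ∘ Emb(⟨g(A)⟩, ⟨g(B)⟩)`.
-/

open Set Substructure

section SameQfType

variable {L : FirstOrder.Language} {M : Type*} [L.Structure M]

theorem SameQfType.trans {n : ℕ} {x y z : Fin n → M} (hxy : SameQfType L M x y)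
    (hyz : SameQfType L M y z) : SameQfType L M x z :=
  fun φ hφ => (hxy φ hφ).trans (hyz φ hφ)

theorem FirstOrder.Language.BoundedFormula.IsQF.realize_comp_embedding
    {P Q α : Type*} [L.Structure P] [L.Structure Q] {φ : L.Formula α} (hφ : φ.IsQF)
    (e : P ↪[L] Q) (v : α → P) :
    φ.Realize (e ∘ v) ↔ φ.Realize v := by
  have hdefault : (e ∘ default : Fin 0 → Q) = default := Subsingleton.elim _ _
  simpa only [Formula.Realize, hdefault] using hφ.realize_embedding e (v := v) (xs := default)

theorem sameQfType_subtype_comp_embedding {S : L.Substructure M} (e : S ↪[L] M) {n : ℕ}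
    (u : Fin n → S) : SameQfType L M (Subtype.val ∘ u) (e ∘ u) := fun _ hφ =>
  (hφ.realize_comp_embedding S.subtype u).trans (hφ.realize_comp_embedding e u).symm

theorem realize_iff_of_forall_sameQfType {α : Type*} [Finite α] {x y : α → M}
    (hxy : ∀ (n : ℕ) (u : Fin n → α), SameQfType L M (x ∘ u) (y ∘ u))
    {φ : L.Formula α} (hφ : φ.IsQF) : φ.Realize x ↔ φ.Realize y := by
  obtain ⟨n, ⟨σ⟩⟩ := Finite.exists_equiv_fin α
  simpa only [Formula.realize_relabel, Function.comp_assoc, Equiv.symm_comp_self,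
    Function.comp_id] using hxy n σ.symm (φ.relabel σ) (hφ.relabel _)

end SameQfType

section ClosureEmbedding

variable {L : FirstOrder.Language} {M : Type*} [L.Structure M] {α : Type*}

theorem exists_term_realize_eq_of_mem_closure_range {x : α → M} {a : M}
    (ha : a ∈ closure L (range x)) : ∃ t : L.Term α, t.realize x = a := by
  obtain ⟨t, rfl⟩ := mem_closure_iff_exists_term.mp ha
  refine ⟨t.relabel (rangeSplitting x), ?_⟩
  rw [Term.realize_relabel]
  congr 1
  exact funext (apply_rangeSplitting x)

theorem exists_embedding_closure_range_of_realize_iff {x y : α → M}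
    (hxy : ∀ φ : L.Formula α, φ.IsQF → (φ.Realize x ↔ φ.Realize y))
    {C : L.Substructure M} (hC : closure L (range x) = C) :
    ∃ E : C ↪[L] M, (∀ i (hi : x i ∈ C), E ⟨x i, hi⟩ = y i) ∧
      ∀ c, E c ∈ closure L (range y) := by
  subst hC
  -- `t(x) ↦ t(y)` is well defined and an embedding: equations and relations between terms are
  -- quantifier-free formulas.
  choose t ht using fun c : closure L (range x) => exists_term_realize_eq_of_mem_closure_range c.2
  have realize_eq_iff (s s' : L.Term α) :
      s.realize x = s'.realize x ↔ s.realize y = s'.realize y := by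
    simpa only [Formula.realize_equal] using
      hxy (s.equal s') (BoundedFormula.IsAtomic.equal _ _).isQF
  refine ⟨⟨⟨fun c => (t c).realize y, fun c c' hcc' => ?_⟩, fun F u => ?_, fun R u => ?_⟩,
    fun i hi => ?_, fun c => (t c).realize_mem _ fun i => subset_closure (mem_range_self i)⟩
  · exact Subtype.ext (by rw [← ht c, ← ht c']; exact (realize_eq_iff _ _).mpr hcc')
  · change (t (Structure.funMap F u)).realize y = (Term.func F fun i => t (u i)).realize y
    refine (realize_eq_iff _ _).mp ?_
    rw [ht, Term.realize_func]
    exact congrArg (Structure.funMap F) (funext fun i => (ht (u i)).symm)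
  · change Structure.RelMap R (fun i => (t (u i)).realize y) ↔
      Structure.RelMap R (Subtype.val ∘ u)
    have hrel := hxy (R.formula fun i => t (u i)) (BoundedFormula.IsAtomic.rel _ _).isQF
    rw [Formula.realize_rel, Formula.realize_rel] at hrel
    rw [← hrel]
    exact iff_of_eq (congrArg _ (funext fun i => ht (u i)))
  · exact (realize_eq_iff (t _) (Term.var i)).mp (ht _)

end ClosureEmbedding

section SemiRetraction

variable {L L' : FirstOrder.Language} {M N : Type*} [L.Structure M] [L'.Structure N]

theorem mapsTo_closure_image (g : M → N) (s : Set M) : MapsTo g s (closure L' (g '' s)) :=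
  fun _ ha => subset_closure (mem_image_of_mem g ha)

theorem IsSemiRetraction.exists_embedding_pullback {g : M → N} {f : N → M}
    (hsr : IsSemiRetraction L L' M N g f) {S : L.Substructure M} (hS : (S : Set M).Finite)
    {S' : L'.Substructure N} (hSS' : MapsTo g S S') (j : S' ↪[L'] N) :
    ∃ E : S ↪[L] M, ∀ a : S, E a = f (j ⟨g a, hSS' a.2⟩) := by
  have : Finite S := hS.to_subtype
  have hqf (n : ℕ) (u : Fin n → S) :
      SameQfType L M (Subtype.val ∘ u) ((fun a : S => f (j ⟨g a, hSS' a.2⟩)) ∘ u) :=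
    (hsr.2.2 n _).trans
      (hsr.2.1.2 n _ _ (sameQfType_subtype_comp_embedding j fun i => ⟨g (u i), hSS' (u i).2⟩))
  obtain ⟨E, hE, -⟩ := exists_embedding_closure_range_of_realize_iff
    (fun φ hφ => realize_iff_of_forall_sameQfType hqf hφ) (C := S)
    (by rw [Subtype.range_coe, closure_eq])
  exact ⟨E, fun a => hE a a.2⟩

theorem QftpRespecting.exists_embedding_closure_image {g : M → N}
    (hg : QftpRespecting L L' M N g) {S T : L.Substructure M} (hS : (S : Set M).Finite)
    (e : S ↪[L] T) :
    ∃ e' : closure L' (g '' S) ↪[L'] closure L' (g '' T), ∀ a : S,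
      e' ⟨g a, mapsTo_closure_image g S a.2⟩ =
        ⟨g (e a), mapsTo_closure_image g T (e a).2⟩ := by
  have : Finite S := hS.to_subtype
  have hqf (n : ℕ) (u : Fin n → S) :
      SameQfType L' N ((g ∘ Subtype.val) ∘ u) ((fun a : S => g (e a)) ∘ u) :=
    hg.2 n _ _ (sameQfType_subtype_comp_embedding (T.subtype.comp e) u)
  obtain ⟨E, hE, hErange⟩ := exists_embedding_closure_range_of_realize_iff
    (fun φ hφ => realize_iff_of_forall_sameQfType hqf hφ)
    (C := closure L' (g '' S)) (by rw [range_comp, Subtype.range_coe])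
  have hrange : closure L' (range fun a : S => g (e a)) ≤ closure L' (g '' T) :=
    closure_mono (range_subset_iff.mpr fun a => mem_image_of_mem g (e a).2)
  exact ⟨E.codRestrict _ fun c => hrange (hErange c), fun a => Subtype.ext (hE a _)⟩

end SemiRetraction

theorem semiRetraction_transfers_embedding_Ramsey_degree
    {L L' : FirstOrder.Language} {M N : Type*} [L.Structure M] [L'.Structure N]
    (g : M → N) (f : N → M)
    (hsr : IsSemiRetraction L L' M N g f)
    (A : L.Substructure M) (hAfin : (A : Set M).Finite)
    (d : ℕ)
    (hdeg : ∀ B₀ : L'.Substructure N, B₀.FG → ∀ r : ℕ, 2 ≤ r →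
      ArrowEmb L' N (Substructure.closure L' (g '' (A : Set M))) B₀ r d) :
    ∀ B : L.Substructure M, (B : Set M).Finite → ∀ r : ℕ, 2 ≤ r →
      ArrowEmb L M A B r d := by
  intro B hBfin r hr c
  choose Φ hΦ using fun j : closure L' (g '' A) ↪[L'] N =>
    hsr.exists_embedding_pullback hAfin (mapsTo_closure_image g A) j
  obtain ⟨h, hh⟩ := hdeg _ (fg_closure (hBfin.image g)) r hr (c ∘ Φ)
  obtain ⟨H, hH⟩ := hsr.exists_embedding_pullback hBfin (mapsTo_closure_image g B) h
  refine ⟨H, (ncard_le_ncard ?_ (toFinite _)).trans hh⟩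
  rintro _ ⟨_, ⟨e, rfl⟩, rfl⟩
  obtain ⟨e', he'⟩ := hsr.1.exists_embedding_closure_image hAfin e
  refine ⟨h.comp e', ⟨e', rfl⟩, congrArg c ?_⟩
  ext a
  rw [hΦ, Embedding.comp_apply, he', Embedding.comp_apply, hH]
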